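/- Let G=(V,E) be a connected graph such that R_d(G) has a strict circuit decomposition (each circuit in the decomposition adds a new vertex) and each R_d-circuit is (d+1)-edge-connected. Then |E| ≥ (1/2)(d+1)(|V| + r*_d(G) − 1), where r*_d(G) = |E| − r_d(G). -/

import Mathlib

open Module

/-- The row of the `d`-dimensional rigidity matrix corresponding to the edge `uv`, at the
realization `p : V → ℝ^d`: it has `p u - p v` in the `d` columns of `u`, `p v - p u` in
the `d` columns of `v`, and zeros elsewhere. -/
def rigidityRow {V : Type*} [DecidableEq V] (d : ℕ) (p : V → Fin d → ℝ) :
    Sym2 V → (V × Fin d → ℝ) :=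
  Sym2.lift ⟨fun u v x =>
      if x.1 = u then p u x.2 - p v x.2 else if x.1 = v then p v x.2 - p u x.2 else 0, by
    intro u v
    funext x
    by_cases huv : u = v
    · subst huv; rfl
    · by_cases h1 : x.1 = u <;> by_cases h2 : x.1 = v
      · exact absurd (h1 ▸ h2) huv
      · simp [h1, h2, huv, Ne.symm huv]
      · simp [h1, h2, huv, Ne.symm huv]
      · simp [h1, h2]⟩

/-- The rank, in the `d`-dimensional generic rigidity matroid on vertex set `V`, of a set
`A` of edges: the maximum, over all realizations `p : V → ℝ^d`, of the rank of the
corresponding set of rigidity matrix rows. -/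
noncomputable def genRigidityRank {V : Type*} [DecidableEq V] (d : ℕ) (A : Set (Sym2 V)) :
    ℕ :=
  ⨆ p : V → Fin d → ℝ, finrank ℝ (Submodule.span ℝ (rigidityRow d p '' A))

/-- A finite set `A` of edges is a circuit of the `d`-dimensional generic rigidity matroid
if its rank is `|A| - 1` and every proper subset is independent. -/
def IsRdCircuitSet {V : Type*} [DecidableEq V] (d : ℕ) (A : Set (Sym2 V)) : Prop :=
  A.Finite ∧ genRigidityRank d A + 1 = A.ncard ∧
    ∀ B ⊂ A, genRigidityRank d B = B.ncard

/-- A graph `G` is an `R_d`-circuit if its edge set is a circuit of the `d`-dimensional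
generic rigidity matroid. -/
def SimpleGraph.IsRdCircuit {V : Type*} [DecidableEq V] (d : ℕ) (G : SimpleGraph V) :
    Prop :=
  IsRdCircuitSet d G.edgeSet

/-- `k_d(G) = d|V| - binom(d+1)(2) - r_d(E)`, the number of degrees of freedom of `G`
in `ℝ^d` (an integer). -/
noncomputable def degFreedom {V : Type*} [DecidableEq V] [Fintype V] (d : ℕ)
    (G : SimpleGraph V) : ℤ :=
  d * Fintype.card V - (d + 1).choose 2 - genRigidityRank d G.edgeSet

/-- The set of vertices covered by a set of edges. -/
def vertsOf {V : Type*} (A : Set (Sym2 V)) : Set V := {v | ∃ e ∈ A, v ∈ e}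

/-- A set `A` of edges (viewed as a graph on `vertsOf A`) is `k`-edge-connected: every
edge cut separating its vertex set contains at least `k` edges. -/
def IsKEdgeConnectedEdgeSet {V : Type*} (k : ℕ) (A : Set (Sym2 V)) : Prop :=
  ∀ S : Set V, S ⊆ vertsOf A → S.Nonempty → (vertsOf A \ S).Nonempty →
    k ≤ {e ∈ A | ∃ u v : V, e = s(u, v) ∧ u ∈ S ∧ v ∉ S}.ncard

/-- `D j = C 0 ∪ ⋯ ∪ C (j-1)`, the union of the first `j` edge sets of a sequence. -/
def circUnion {V : Type*} (C : ℕ → Set (Sym2 V)) (j : ℕ) : Set (Sym2 V) := ⋃ i < j, C i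

/-- `(C 0, …, C (t-1))` is a circuit decomposition of the `d`-dimensional generic rigidity
matroid of `G`: each `C i` is an `R_d`-circuit contained in the edge set of `G`, for
`i ≥ 1` the lobe `C i \ D i` is nonempty (E1) and inclusionwise minimal among the lobes of
circuits of `R_d(G)` having a nonempty lobe (E2), and the circuits cover `E(G)`. -/
def SimpleGraph.IsRdCircDecomp {V : Type*} [DecidableEq V] (d : ℕ) (G : SimpleGraph V)
    (C : ℕ → Set (Sym2 V)) (t : ℕ) : Prop :=
  (∀ i < t, C i ⊆ G.edgeSet ∧ IsRdCircuitSet d (C i)) ∧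
  (∀ i, 1 ≤ i → i < t →
    C i \ circUnion C i ≠ ∅ ∧
    ∀ C' ⊆ G.edgeSet, IsRdCircuitSet d C' → C' \ circUnion C i ≠ ∅ →
      ¬ (C' \ circUnion C i ⊂ C i \ circUnion C i)) ∧
  circUnion C t = G.edgeSet

/-- A circuit decomposition is strict if every circuit adds at least one new vertex. -/
def SimpleGraph.IsStrictRdCircDecomp {V : Type*} [DecidableEq V] (d : ℕ)
    (G : SimpleGraph V) (C : ℕ → Set (Sym2 V)) (t : ℕ) : Prop :=
  G.IsRdCircDecomp d C t ∧ ∀ i < t, (vertsOf (C i) \ vertsOf (circUnion C i)).Nonempty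

/-!
The nullity `r*_d(G)` is at most the length `t` of the decomposition, and counting edges along
the decomposition gives `(d + 1) (|V| + t - 1) ≤ 2 |E|`.

For the first bound, `r_d` is the rank function of the linear matroid of the rigidity rows at a
single realization that is generic for all edge sets at once (along a line of realizations the
rank of a set drops only at finitely many points). Hence matroid arguments apply: if adding `C_j`
to `D_j = C_0 ∪ ⋯ ∪ C_{j-1}` raised the nullity by two, deleting an element of the lobe
`C_j \ D_j` would leave a circuit with a smaller lobe.

For the second, `C_j` has a vertex `w` outside `V(D_j)`. Every component of `(V, D_j)` meeting
`V(C_j)` (e.g. `{w}`) determines a cut of the `(d + 1)`-edge-connected `C_j` with at least `d + 1`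
edges, all new, and a new edge lies in at most two such cuts. Since `C_j` merges the touched
components, `(d + 1) (|V| + j) ≤ 2 |D_j| + (d + 1) c(D_j)` by induction, `c` being the number of
components, and `c(E) = 1`.
-/

structure IsRankFunction {α : Type*} (r : Set α → ℕ) : Prop where
  empty : r ∅ = 0
  mono : Monotone r
  insert_le : ∀ A a, r (insert a A) ≤ r A + 1
  submodular : ∀ A B, r (A ∪ B) + r (A ∩ B) ≤ r A + r B

theorem isRankFunction_finrank_span {K W α : Type*} [DivisionRing K] [AddCommGroup W]
    [Module K W] [FiniteDimensional K W] (f : α → W) :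
    IsRankFunction fun A => finrank K (Submodule.span K (f '' A)) where
  empty := by simp
  mono _ _ h := Submodule.finrank_mono (Submodule.span_mono (Set.image_mono h))
  insert_le A a := by
    rw [Set.image_insert_eq, Submodule.span_insert, add_comm]
    exact (Submodule.finrank_add_le_finrank_add_finrank _ _).trans
      (Nat.add_le_add_right (by simpa using finrank_span_le_card (R := K) {f a}) _)
  submodular A B := by
    have hinter : Submodule.span K (f '' (A ∩ B)) ≤
        Submodule.span K (f '' A) ⊓ Submodule.span K (f '' B) :=
      le_inf (Submodule.span_mono (Set.image_mono Set.inter_subset_left))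
        (Submodule.span_mono (Set.image_mono Set.inter_subset_right))
    have := Submodule.finrank_sup_add_finrank_inf_eq (Submodule.span K (f '' A))
      (Submodule.span K (f '' B))
    have := Submodule.finrank_mono hinter
    show finrank K (Submodule.span K (f '' (A ∪ B))) + _ ≤ _
    rw [Set.image_union, Submodule.span_union]
    omega

def IsRankCircuit {α : Type*} (r : Set α → ℕ) (Z : Set α) : Prop :=
  r Z < Z.ncard ∧ ∀ B ⊂ Z, r B = B.ncard

theorem IsRankCircuit.rank_add_one {α : Type*} [Finite α] {r : Set α → ℕ}
    (hr : IsRankFunction r) {Z : Set α} (hZ : IsRankCircuit r Z) : r Z + 1 = Z.ncard := by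
  obtain ⟨z, hz⟩ : Z.Nonempty := Set.nonempty_of_ncard_ne_zero (by have := hZ.1; omega)
  have := hZ.2 _ (Set.sdiff_singleton_ssubset.2 hz)
  have := hr.mono (Set.sdiff_subset : Z \ {z} ⊆ Z)
  have := Set.ncard_sdiff_singleton_add_one hz
  have := hZ.1
  omega

namespace IsRankFunction

variable {α : Type*} {r : Set α → ℕ}

theorem rank_union_le [Finite α] (hr : IsRankFunction r) (A S : Set α) :
    r (A ∪ S) ≤ r A + S.ncard := by
  induction S, S.toFinite using Set.Finite.induction_on with
  | empty => simp
  | @insert a s ha _ ih =>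
    rw [Set.union_insert, Set.ncard_insert_of_notMem ha]
    have := hr.insert_le (A ∪ s) a
    omega

theorem rank_le_ncard [Finite α] (hr : IsRankFunction r) (A : Set α) : r A ≤ A.ncard := by
  simpa [hr.empty] using hr.rank_union_le ∅ A

theorem rank_eq_ncard_of_subset [Finite α] (hr : IsRankFunction r) {B Y : Set α}
    (hY : r Y = Y.ncard) (hBY : B ⊆ Y) : r B = B.ncard := by
  have hunion := hr.rank_union_le B (Y \ B)
  rw [Set.union_sdiff_cancel hBY] at hunion
  have := Set.ncard_sdiff_add_ncard_of_subset hBY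
  have := hr.rank_le_ncard B
  omega

theorem rank_insert_eq_ncard [Finite α] (hr : IsRankFunction r) {Y : Set α} {a : α}
    (hY : r Y = Y.ncard) (ha : a ∉ Y) (hne : r (insert a Y) ≠ r Y) :
    r (insert a Y) = (insert a Y).ncard := by
  have := hr.insert_le Y a
  have := hr.mono (Set.subset_insert a Y)
  rw [Set.ncard_insert_of_notMem ha]
  omega

theorem rank_eq_ncard_of_forall_rank_diff_lt [Finite α] (hr : IsRankFunction r) {Y : Set α}
    (h : ∀ y ∈ Y, r (Y \ {y}) < r Y) : r Y = Y.ncard := by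
  induction Y, Y.toFinite using Set.Finite.induction_on with
  | empty => simp [hr.empty]
  | @insert a s ha _ ih =>
    have hs : r s = s.ncard := ih fun z hz => by
      have hunion : insert a s \ {z} ∪ s = insert a s := by grind
      have hinter : insert a s \ {z} ∩ s = s \ {z} := by grind
      have := hr.submodular (insert a s \ {z}) s
      rw [hunion, hinter] at this
      have := h z (Set.mem_insert_of_mem a hz)
      omega
    refine hr.rank_insert_eq_ncard hs ha fun heq => ?_
    have := h a (Set.mem_insert a s)
    rw [Set.insert_sdiff_self_of_notMem ha] at this
    omega

theorem exists_rank_diff_singleton_eq [Finite α] (hr : IsRankFunction r) {Y : Set α}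
    (hY : r Y < Y.ncard) : ∃ y ∈ Y, r (Y \ {y}) = r Y := by
  by_contra! h
  have := hr.rank_eq_ncard_of_forall_rank_diff_lt fun y hy =>
    (hr.mono Set.sdiff_subset).lt_of_ne (h y hy)
  omega

/-- The fundamental circuit of `a`: for `Y₀ ⊆ Y` minimal with `a` in its closure, `Y₀` is
independent and `insert a Y₀` is a circuit. -/
theorem exists_isRankCircuit_of_rank_insert_eq [Finite α] (hr : IsRankFunction r) {Y : Set α}
    {a : α} (ha : a ∉ Y) (h : r (insert a Y) = r Y) :
    ∃ Z ⊆ insert a Y, a ∈ Z ∧ IsRankCircuit r Z := by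
  obtain ⟨Y₀, hY₀Y, hmin⟩ := exists_minimal_le_of_wellFoundedLT
    (fun Y' => Y' ⊆ Y ∧ r (insert a Y') = r Y') Y ⟨subset_rfl, h⟩
  obtain ⟨hY₀sub, hY₀⟩ := hmin.prop
  have ha₀ : a ∉ Y₀ := fun h => ha (hY₀sub h)
  have hind : r Y₀ = Y₀.ncard := by
    by_contra hdep
    obtain ⟨y, hy, hry⟩ :=
      hr.exists_rank_diff_singleton_eq ((hr.rank_le_ncard Y₀).lt_of_ne hdep)
    refine hmin.not_prop_of_lt (Set.sdiff_singleton_ssubset.2 hy)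
      ⟨Set.sdiff_subset.trans hY₀sub, ?_⟩
    have := hr.mono (Set.insert_subset_insert (Set.sdiff_subset : Y₀ \ {y} ⊆ Y₀) (a := a))
    have := hr.mono (Set.subset_insert a (Y₀ \ {y}))
    omega
  refine ⟨insert a Y₀, Set.insert_subset_insert hY₀sub, Set.mem_insert a Y₀, ?_, ?_⟩
  · rw [hY₀, Set.ncard_insert_of_notMem ha₀, hind]
    omega
  intro B hB
  obtain ⟨w, hwZ, hwB⟩ := Set.exists_of_ssubset hB
  rcases Set.mem_insert_iff.1 hwZ with rfl | hw
  · exact hr.rank_eq_ncard_of_subset hind fun x hx =>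
      (Set.mem_insert_iff.1 (hB.1 hx)).resolve_left fun h => hwB (h ▸ hx)
  · have hind' := hr.rank_eq_ncard_of_subset hind (Set.sdiff_subset : Y₀ \ {w} ⊆ Y₀)
    have hne : r (insert a (Y₀ \ {w})) ≠ r (Y₀ \ {w}) := fun heq =>
      hmin.not_prop_of_lt (Set.sdiff_singleton_ssubset.2 hw)
        ⟨Set.sdiff_subset.trans hY₀sub, heq⟩
    refine hr.rank_eq_ncard_of_subset
      (hr.rank_insert_eq_ncard hind' (fun h => ha₀ h.1) hne) fun x hx => ?_
    rcases Set.mem_insert_iff.1 (hB.1 hx) with rfl | hxY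
    · exact Set.mem_insert x _
    · exact Set.mem_insert_of_mem a ⟨hxY, fun hxw => hwB (hxw ▸ hx)⟩

theorem exists_isRankCircuit_not_subset [Finite α] (hr : IsRankFunction r) (D S : Set α)
    (h : r (D ∪ S) + D.ncard < r D + (D ∪ S).ncard) :
    ∃ Z ⊆ D ∪ S, IsRankCircuit r Z ∧ ¬ Z ⊆ D := by
  induction S, S.toFinite using Set.Finite.induction_on with
  | empty => simp at h
  | @insert a s _ _ ih =>
    rw [Set.union_insert] at h ⊢
    by_cases haD : a ∈ D ∪ s
    · rw [Set.insert_eq_of_mem haD] at h ⊢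
      exact ih h
    by_cases hra : r (insert a (D ∪ s)) = r (D ∪ s)
    · obtain ⟨Z, hZ, haZ, hZc⟩ := hr.exists_isRankCircuit_of_rank_insert_eq haD hra
      exact ⟨Z, hZ, hZc, fun hZD => haD (Or.inl (hZD haZ))⟩
    · obtain ⟨Z, hZ, hZc, hZD⟩ := ih (by
        have := hr.mono (Set.subset_insert a (D ∪ s))
        rw [Set.ncard_insert_of_notMem haD] at h
        omega)
      exact ⟨Z, hZ.trans (Set.subset_insert a _), hZc, hZD⟩

/-- The nullity `|X| - r X` grows by at most one from `D` to `D ∪ C` when no circuit has a lobe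
strictly inside `C \ D`: otherwise, after deleting some `e ∈ C \ D`, a circuit outside `D`
would remain. -/
theorem rank_add_ncard_union_le [Finite α] (hr : IsRankFunction r) {D C : Set α}
    (hlobe : (C \ D).Nonempty)
    (hmin : ∀ Z ⊆ D ∪ C, IsRankCircuit r Z → ¬ Z ⊆ D → ¬ Z \ D ⊂ C \ D) :
    r D + (D ∪ C).ncard ≤ r (D ∪ C) + D.ncard + 1 := by
  obtain ⟨e, heC, heD⟩ := hlobe
  have heX : e ∉ D ∪ C \ {e} := by simp [heD]
  have hX : insert e (D ∪ C \ {e}) = D ∪ C := by grind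
  by_contra! hlt
  obtain ⟨Z, hZ, hZc, hZD⟩ := hr.exists_isRankCircuit_not_subset D (C \ {e}) (by
    have hrank := hr.mono (Set.subset_insert e (D ∪ C \ {e}))
    have hcard := Set.ncard_insert_of_notMem heX
    rw [hX] at hrank hcard
    omega)
  refine hmin Z (hZ.trans (Set.union_subset_union_right D Set.sdiff_subset)) hZc hZD
    ⟨fun x hx => ⟨((hZ hx.1).resolve_left hx.2).1, hx.2⟩, fun hsub => ?_⟩
  exact heX (hZ (hsub ⟨heC, heD⟩).1)

end IsRankFunction

open Polynomial in
theorem finite_setOf_not_linearIndependent_add_smul {ι n : Type*} [Fintype ι] [Fintype n]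
    (a b : ι → n → ℝ) {τ₀ : ℝ} (h₀ : LinearIndependent ℝ fun i => a i + τ₀ • b i) :
    {τ : ℝ | ¬ LinearIndependent ℝ fun i => a i + τ • b i}.Finite := by
  classical
  let P : Matrix ι ι ℝ[X] := Matrix.of fun i j =>
    ∑ x, (C (a i x) + X * C (b i x)) * (C (a j x) + X * C (b j x))
  -- `P.det` evaluates to the Gram determinant of the family at every `τ`
  have hgram (τ : ℝ) :
      (P.det).eval τ ≠ 0 ↔ LinearIndependent ℝ fun i => a i + τ • b i := by
    have hP : (evalRingHom τ).mapMatrix P =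
        Matrix.gram ℝ fun i => WithLp.toLp 2 (a i + τ • b i) := by
      ext i j
      simp only [Matrix.gram, PiLp.inner_apply, RCLike.inner_apply, Real.ringHom_apply,
        RingHom.mapMatrix_apply, Matrix.map_apply, Matrix.of_apply, P, coe_evalRingHom,
        eval_finsetSum, eval_mul, eval_add, eval_C, eval_X, Pi.add_apply, Pi.smul_apply,
        smul_eq_mul]
      exact Finset.sum_congr rfl fun x _ => by ring
    rw [← coe_evalRingHom, RingHom.map_det, hP, Matrix.det_gram_ne_zero_iff_linearIndependent]
    exact (WithLp.linearEquiv 2 ℝ (n → ℝ)).symm.toLinearMap.linearIndependent_iff_of_injOn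
      (WithLp.linearEquiv 2 ℝ (n → ℝ)).symm.injective.injOn
  have hdet : P.det ≠ 0 := fun h => (hgram τ₀).2 h₀ (by simp [h])
  refine (Polynomial.finite_setOfPred_isRoot hdet).subset fun τ hτ => ?_
  by_contra hroot
  exact hτ ((hgram τ).1 hroot)

section Rigidity

variable {V : Type*} [DecidableEq V] {d : ℕ}

variable (d) in
noncomputable def rankAt (p : V → Fin d → ℝ) (A : Set (Sym2 V)) : ℕ :=
  finrank ℝ (Submodule.span ℝ (rigidityRow d p '' A))

theorem bddAbove_range_rankAt [Fintype V] (A : Set (Sym2 V)) :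
    BddAbove (Set.range fun p => rankAt d p A) :=
  ⟨finrank ℝ (V × Fin d → ℝ), Set.forall_mem_range.2 fun _ => Submodule.finrank_le _⟩

theorem rankAt_le_genRigidityRank [Fintype V] (p : V → Fin d → ℝ) (A : Set (Sym2 V)) :
    rankAt d p A ≤ genRigidityRank d A :=
  le_ciSup (bddAbove_range_rankAt A) p

variable (d) in
theorem exists_rankAt_eq_genRigidityRank [Fintype V] (A : Set (Sym2 V)) :
    ∃ p, rankAt d p A = genRigidityRank d A :=
  Nat.sSup_mem (Set.range_nonempty _) (bddAbove_range_rankAt A)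

theorem rigidityRow_add_smul (p q : V → Fin d → ℝ) (τ : ℝ) (e : Sym2 V) :
    rigidityRow d (p + τ • q) e = rigidityRow d p e + τ • rigidityRow d q e := by
  induction e using Sym2.ind with
  | h u v =>
    funext x
    simp only [rigidityRow, Sym2.lift_mk, Pi.add_apply, Pi.smul_apply, smul_eq_mul]
    split_ifs <;> ring

theorem finite_setOf_rankAt_lt [Fintype V] (p q : V → Fin d → ℝ) (τ₀ : ℝ)
    (A : Set (Sym2 V)) :
    {τ : ℝ | rankAt d (p + τ • q) A < rankAt d (p + τ₀ • q) A}.Finite := by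
  obtain ⟨κ, g, hg, hspan, hind⟩ :=
    exists_linearIndependent' ℝ fun e : A => rigidityRow d (p + τ₀ • q) e
  have : Fintype κ := @Fintype.ofFinite κ (Finite.of_injective g hg)
  have hrank : rankAt d (p + τ₀ • q) A = Fintype.card κ := by
    rw [rankAt, Set.image_eq_range, ← hspan, finrank_span_eq_card hind]
  simp only [Function.comp_def, rigidityRow_add_smul] at hind
  refine (finite_setOf_not_linearIndependent_add_smul _ _ hind).subset fun τ hτ hli => ?_
  refine (hrank ▸ hτ).not_ge ((finrank_span_eq_card hli).symm.le.trans ?_)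
  refine Submodule.finrank_mono (Submodule.span_mono ?_)
  rintro _ ⟨k, rfl⟩
  exact ⟨g k, (g k).2, rigidityRow_add_smul p q τ _⟩

variable (d) in
theorem exists_rankAt_eq_genRigidityRank_forall [Fintype V] :
    ∃ p : V → Fin d → ℝ, ∀ A, rankAt d p A = genRigidityRank d A := by
  classical
  suffices h : ∀ s : Finset (Set (Sym2 V)), ∃ p : V → Fin d → ℝ,
      ∀ A ∈ s, rankAt d p A = genRigidityRank d A by
    obtain ⟨p, hp⟩ := h Finset.univ
    exact ⟨p, fun A => hp A (Finset.mem_univ A)⟩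
  intro s
  induction s using Finset.induction_on with
  | empty => exact ⟨0, by simp⟩
  | insert A s _ ih =>
    obtain ⟨p, hp⟩ := ih
    obtain ⟨q, hq⟩ := exists_rankAt_eq_genRigidityRank d A
    -- a point of the line through `p` and `q` as good as `p` on `s` and as `q` on `A`
    have hbad : ((⋃ B ∈ s, {τ : ℝ | rankAt d (p + τ • (q - p)) B <
          rankAt d (p + (0 : ℝ) • (q - p)) B}) ∪
        {τ : ℝ | rankAt d (p + τ • (q - p)) A <
          rankAt d (p + (1 : ℝ) • (q - p)) A}).Finite :=
      (s.finite_toSet.biUnion fun B _ => finite_setOf_rankAt_lt _ _ _ B).union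
        (finite_setOf_rankAt_lt _ _ _ A)
    obtain ⟨τ, hτ⟩ := hbad.exists_notMem
    simp only [zero_smul, add_zero, one_smul, add_sub_cancel, Set.mem_union, Set.mem_iUnion,
      Set.mem_ofPred_eq, not_or, not_exists, not_lt] at hτ
    refine ⟨p + τ • (q - p), fun B hB => ?_⟩
    refine (rankAt_le_genRigidityRank _ B).antisymm ?_
    rcases Finset.mem_insert.1 hB with rfl | hB
    · exact hq ▸ hτ.2
    · exact hp B hB ▸ hτ.1 B hB

variable (d) in
theorem isRankFunction_genRigidityRank [Fintype V] :
    IsRankFunction (genRigidityRank d : Set (Sym2 V) → ℕ) := by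
  obtain ⟨p, hp⟩ := exists_rankAt_eq_genRigidityRank_forall (V := V) d
  rw [show genRigidityRank d = fun A => rankAt d p A from funext fun A => (hp A).symm]
  exact isRankFunction_finrank_span _

theorem IsRankCircuit.isRdCircuitSet [Fintype V] {Z : Set (Sym2 V)}
    (hZ : IsRankCircuit (genRigidityRank d) Z) : IsRdCircuitSet d Z :=
  ⟨Z.toFinite, hZ.rank_add_one (isRankFunction_genRigidityRank (V := V) d), hZ.2⟩

end Rigidity

section Decomposition

variable {V : Type*} {C : ℕ → Set (Sym2 V)}

@[simp]
theorem circUnion_zero : circUnion C 0 = ∅ := by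
  simp [circUnion]

theorem circUnion_succ (j : ℕ) : circUnion C (j + 1) = circUnion C j ∪ C j := by
  ext x
  simp only [circUnion, Set.mem_iUnion, Set.mem_union, Nat.lt_succ_iff_lt_or_eq, exists_prop,
    or_and_right, exists_or, exists_eq_left]

variable [DecidableEq V] {d t : ℕ} {G : SimpleGraph V}

theorem SimpleGraph.IsRdCircDecomp.circUnion_subset (h : G.IsRdCircDecomp d C t) {j : ℕ}
    (hj : j ≤ t) : circUnion C j ⊆ G.edgeSet := by
  simp only [circUnion, Set.iUnion_subset_iff]
  exact fun i hi => (h.1 i (by omega)).1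

theorem SimpleGraph.IsRdCircDecomp.ncard_le_genRigidityRank_add [Fintype V]
    (h : G.IsRdCircDecomp d C t) : G.edgeSet.ncard ≤ genRigidityRank d G.edgeSet + t := by
  have hr := isRankFunction_genRigidityRank (V := V) d
  suffices ∀ j ≤ t, (circUnion C j).ncard ≤ genRigidityRank d (circUnion C j) + j by
    simpa [h.2.2] using this t le_rfl
  intro j hj
  induction j with
  | zero => simp
  | succ j ih =>
    have ih := ih (by omega)
    obtain ⟨hCE, hCcirc⟩ := h.1 j (by omega)
    rw [circUnion_succ]
    rcases Nat.eq_zero_or_pos j with rfl | hj0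
    · simp only [circUnion_zero, Set.empty_union]
      have := hCcirc.2.1
      omega
    obtain ⟨hlobe, hE2⟩ := h.2.1 j hj0 (by omega)
    have hDC : circUnion C j ∪ C j ⊆ G.edgeSet :=
      Set.union_subset (h.circUnion_subset (by omega)) hCE
    have := hr.rank_add_ncard_union_le (Set.nonempty_iff_ne_empty.2 hlobe)
      fun Z hZ hZc hZD => hE2 Z (hZ.trans hDC) hZc.isRdCircuitSet (by rwa [Ne, Set.sdiff_eq_empty])
    omega

end Decomposition

section Components

open SimpleGraph

variable {V : Type*}

noncomputable def numComponents (A : Set (Sym2 V)) : ℕ :=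
  Nat.card (fromEdgeSet A).ConnectedComponent

def touchedComponents (A B : Set (Sym2 V)) : Set (fromEdgeSet A).ConnectedComponent :=
  (fromEdgeSet A).connectedComponentMk '' vertsOf B

theorem numComponents_empty : numComponents (∅ : Set (Sym2 V)) = Nat.card V := by
  rw [numComponents, fromEdgeSet_empty]
  refine (Nat.card_congr (Equiv.ofBijective _ ⟨fun u v h => ?_, Quot.mk_surjective⟩)).symm
  exact reachable_bot.1 (ConnectedComponent.eq.1 h)

theorem numComponents_edgeSet {G : SimpleGraph V} (hG : G.Connected) :
    numComponents G.edgeSet = 1 := by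
  rw [numComponents, fromEdgeSet_edgeSet]
  have := hG.preconnected.subsingleton_connectedComponent
  have := hG.nonempty.map G.connectedComponentMk
  exact Nat.card_unique

theorem reachable_of_reachable_union {A B : Set (Sym2 V)} {x y : V}
    (hx : (fromEdgeSet A).connectedComponentMk x ∉ touchedComponents A B)
    (h : (fromEdgeSet (A ∪ B)).Reachable x y) : (fromEdgeSet A).Reachable x y := by
  obtain ⟨p⟩ := h
  induction p with
  | nil => rfl
  | @cons x z y hadj p ih =>
    rw [fromEdgeSet_adj, Set.mem_union] at hadj
    have hA : s(x, z) ∈ A := hadj.1.resolve_right fun hB =>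
      hx ⟨x, ⟨_, hB, Sym2.mem_mk_left x z⟩, rfl⟩
    have hxz : (fromEdgeSet A).Reachable x z := ((fromEdgeSet_adj A).2 ⟨hA, hadj.2⟩).reachable
    exact hxz.trans (ih (by rwa [← ConnectedComponent.sound hxz]))

/-- The untouched components of `(V, A)` survive in `(V, A ∪ B)`, beside a component meeting
`V(B)`. -/
theorem numComponents_add_one_le [Finite V] {A B : Set (Sym2 V)} (hB : (vertsOf B).Nonempty) :
    numComponents A + 1 ≤ numComponents (A ∪ B) + (touchedComponents A B).ncard := by
  obtain ⟨v₀, hv₀⟩ := hB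
  let φ := ConnectedComponent.map
    (Hom.ofLE (fromEdgeSet_mono (Set.subset_union_left (s := A) (t := B))))
  have hmaps : ∀ c ∈ (touchedComponents A B)ᶜ,
      φ c ∈ ({(fromEdgeSet (A ∪ B)).connectedComponentMk v₀} : Set _)ᶜ := by
    refine ConnectedComponent.ind fun x hx heq => hx ⟨v₀, hv₀, ?_⟩
    exact (ConnectedComponent.sound
      (reachable_of_reachable_union hx (ConnectedComponent.eq.1 heq))).symm
  have hinj : Set.InjOn φ (touchedComponents A B)ᶜ := by
    rintro c₁ hc₁ c₂ - heq
    induction c₁ using ConnectedComponent.ind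
    induction c₂ using ConnectedComponent.ind
    exact ConnectedComponent.sound
      (reachable_of_reachable_union hc₁ (ConnectedComponent.eq.1 heq))
  have := Set.ncard_le_ncard_of_injOn φ hmaps hinj
  have := Set.ncard_add_ncard_compl (touchedComponents A B)
  have := Set.ncard_add_ncard_compl {(fromEdgeSet (A ∪ B)).connectedComponentMk v₀}
  rw [Set.ncard_singleton] at this
  rw [numComponents, numComponents]
  omega

def edgeCut (B : Set (Sym2 V)) (S : Set V) : Set (Sym2 V) :=
  {e ∈ B | ∃ u v : V, e = s(u, v) ∧ u ∈ S ∧ v ∉ S}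

theorem eq_of_reachable_of_notMem_vertsOf {A : Set (Sym2 V)} {w u : V}
    (hw : w ∉ vertsOf A) (h : (fromEdgeSet A).Reachable w u) : u = w := by
  obtain ⟨p⟩ := h
  cases p with
  | nil => rfl
  | cons hadj _ => exact absurd ⟨_, ((fromEdgeSet_adj A).1 hadj).1, Sym2.mem_mk_left _ _⟩ hw

theorem edgeCut_supp_subset {A : Set (Sym2 V)} (B : Set (Sym2 V))
    (c : (fromEdgeSet A).ConnectedComponent) : edgeCut B (c.supp ∩ vertsOf B) ⊆ B \ A := by
  rintro _ ⟨heB, u, v, rfl, hu, hv⟩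
  refine ⟨heB, fun heA => hv ⟨?_, _, heB, Sym2.mem_mk_right u v⟩⟩
  have huv : u ≠ v := fun h => hv (h ▸ hu)
  rw [ConnectedComponent.mem_supp_iff]
  exact (ConnectedComponent.sound ((fromEdgeSet_adj A).2 ⟨heA, huv⟩).reachable).symm.trans hu.1

/-- A new vertex `w` of `B` keeps every touched component from swallowing `V(B)`: if `w` lies
in it, the component is `{w}` and a `B`-edge leaves it. -/
theorem le_ncard_edgeCut_supp {k : ℕ} {A B : Set (Sym2 V)} (hB : IsKEdgeConnectedEdgeSet k B)
    (hloop : ∀ e ∈ B, ¬ e.IsDiag) {w : V} (hw : w ∈ vertsOf B \ vertsOf A)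
    {c : (fromEdgeSet A).ConnectedComponent} (hc : c ∈ touchedComponents A B) :
    k ≤ (edgeCut B (c.supp ∩ vertsOf B)).ncard := by
  obtain ⟨v, hvB, rfl⟩ := hc
  refine hB _ Set.inter_subset_right ⟨v, rfl, hvB⟩ ?_
  by_cases hwc : w ∈ ((fromEdgeSet A).connectedComponentMk v).supp
  · obtain ⟨e, heB, hwe⟩ := hw.1
    refine ⟨Sym2.Mem.other hwe, ⟨e, heB, Sym2.other_mem hwe⟩, fun hu => ?_⟩
    refine Sym2.other_ne (hloop e heB) hwe (eq_of_reachable_of_notMem_vertsOf hw.2 ?_)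
    rw [ConnectedComponent.mem_supp_iff] at hwc
    exact ConnectedComponent.eq.1 (hwc.trans hu.1.symm)
  · exact ⟨w, hw.1, fun h => hwc h.1⟩

/-- Double counting: each touched component has at least `k` cut edges in `B \ A`, and each edge
lies in the cuts of at most the two components of its endpoints. -/
theorem mul_ncard_touchedComponents_le [Finite V] {k : ℕ} {A B : Set (Sym2 V)}
    (hB : IsKEdgeConnectedEdgeSet k B) (hloop : ∀ e ∈ B, ¬ e.IsDiag)
    (hnew : (vertsOf B \ vertsOf A).Nonempty) :
    k * (touchedComponents A B).ncard ≤ 2 * (B \ A).ncard := by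
  classical
  have := Fintype.ofFinite (fromEdgeSet A).ConnectedComponent
  have := Fintype.ofFinite (Sym2 V)
  obtain ⟨w, hw⟩ := hnew
  have key := Finset.card_mul_le_card_mul (m := k) (n := 2)
    (s := (touchedComponents A B).toFinset) (t := (B \ A).toFinset)
    (fun c e => e ∈ edgeCut B (c.supp ∩ vertsOf B)) (fun c hc => ?_) (fun e _ => ?_)
  · rw [Set.ncard_eq_toFinset_card', Set.ncard_eq_toFinset_card']
    linarith
  · refine (le_ncard_edgeCut_supp hB hloop hw (Set.mem_toFinset.1 hc)).trans ?_
    rw [Set.ncard_eq_toFinset_card']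
    refine Finset.card_le_card fun e he => ?_
    rw [Set.mem_toFinset] at he
    exact Finset.mem_filter.2 ⟨Set.mem_toFinset.2 (edgeCut_supp_subset B c he), he⟩
  · induction e using Sym2.ind with
    | h u v =>
      refine (Finset.card_le_card fun c hc => ?_).trans
        (Finset.card_le_two (a := (fromEdgeSet A).connectedComponentMk u)
          (b := (fromEdgeSet A).connectedComponentMk v))
      obtain ⟨-, x, y, hxy, ⟨hx, -⟩, -⟩ := (Finset.mem_filter.1 hc).2
      rw [ConnectedComponent.mem_supp_iff] at hx
      rcases Sym2.mem_iff.1 (hxy ▸ Sym2.mem_mk_left x y) with rfl | rfl <;> simp [← hx]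

theorem mul_numComponents_add_one_le [Finite V] {k : ℕ} {A B : Set (Sym2 V)}
    (hB : IsKEdgeConnectedEdgeSet k B) (hloop : ∀ e ∈ B, ¬ e.IsDiag)
    (hnew : (vertsOf B \ vertsOf A).Nonempty) :
    k * (numComponents A + 1) ≤ 2 * (B \ A).ncard + k * numComponents (A ∪ B) := by
  have hcomp := numComponents_add_one_le (A := A) (hnew.mono Set.sdiff_subset)
  have hcut := mul_ncard_touchedComponents_le hB hloop hnew
  calc k * (numComponents A + 1)
      ≤ k * (numComponents (A ∪ B) + (touchedComponents A B).ncard) :=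
        Nat.mul_le_mul_left k hcomp
    _ ≤ 2 * (B \ A).ncard + k * numComponents (A ∪ B) := by rw [mul_add]; omega

end Components

theorem SimpleGraph.IsStrictRdCircDecomp.mul_card_add_le {V : Type*} [DecidableEq V]
    [Fintype V] {d t : ℕ} {G : SimpleGraph V} {C : ℕ → Set (Sym2 V)}
    (h : G.IsStrictRdCircDecomp d C t)
    (hec : ∀ A : Set (Sym2 V), IsRdCircuitSet d A → IsKEdgeConnectedEdgeSet (d + 1) A)
    {j : ℕ} (hj : j ≤ t) :
    (d + 1) * (Fintype.card V + j) ≤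
      2 * (circUnion C j).ncard + (d + 1) * numComponents (circUnion C j) := by
  induction j with
  | zero => simp [numComponents_empty]
  | succ j ih =>
    have ih := ih (by omega)
    obtain ⟨hCE, hCcirc⟩ := h.1.1 j (by omega)
    have hstep := mul_numComponents_add_one_le (hec _ hCcirc)
      (fun e he => G.not_isDiag_of_mem_edgeSet (hCE he)) (h.2 j (by omega))
    rw [circUnion_succ, ← Set.union_sdiff_self,
      Set.ncard_union_eq Set.disjoint_sdiff_right, Set.union_sdiff_self]
    linarith

/-- If `G = (V, E)` is a connected graph such that `R_d(G)` has a strict circuit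
decomposition, and every `R_d`-circuit is `(d+1)`-edge-connected, then
`|E| ≥ (1/2)(d+1)(|V| + r*_d(G) - 1)`, where `r*_d(G) = |E| - r_d(E)`. -/
theorem strict_circDecomp_edge_lower_bound {V : Type*} [DecidableEq V] [Fintype V]
    (d : ℕ) (G : SimpleGraph V) [DecidableRel G.Adj]
    (hconn : G.Connected)
    (C : ℕ → Set (Sym2 V)) (t : ℕ) (hdecomp : G.IsStrictRdCircDecomp d C t)
    (hec : ∀ A : Set (Sym2 V), IsRdCircuitSet d A → IsKEdgeConnectedEdgeSet (d + 1) A) :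
    ((d : ℚ) + 1) / 2 *
        ((Fintype.card V : ℚ) +
          ((G.edgeFinset.card : ℚ) - (genRigidityRank d G.edgeSet : ℚ)) - 1) ≤
      (G.edgeFinset.card : ℚ) := by
  have hcount := hdecomp.mul_card_add_le hec le_rfl
  have hnullity := hdecomp.1.ncard_le_genRigidityRank_add
  rw [hdecomp.1.2.2, numComponents_edgeSet hconn, mul_one] at hcount
  rw [← G.coe_edgeFinset, Set.ncard_coe_finset] at hcount hnullity
  have hcount' : ((d : ℚ) + 1) * (Fintype.card V + t) ≤ 2 * G.edgeFinset.card + (d + 1) := by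
    exact_mod_cast hcount
  have hnullity' : (G.edgeFinset.card : ℚ) ≤ genRigidityRank d G.edgeSet + t := by
    exact_mod_cast hnullity
  nlinarith
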